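/- Define, for non-negative integers $n$ and $k$ with $k \le n$, $F(n,k) = (-1)^{n+k} \frac{(4n-1)(-\frac{1}{2})_n^2\,(-\frac{1}{2})_{n+k}}{(1)_n^2\,(1)_{n-k}\,(-\frac{1}{2})_k^2}$ and $G(n,k) = (-1)^{n+k} \frac{2(-\frac{1}{2})_n^2\,(-\frac{1}{2})_{n+k-1}}{(1)_{n-1}^2\,(1)_{n-k}\,(-\frac{1}{2})_k^2}$, with the convention that $F(n,k) = 0$ when $k > n$ and $G(n,k) = 0$ when $k > n$ or $n = 0$. Then for all $n \ge 0$ and $k \ge 1$: $F(n,k-1) - F(n,k) = G(n+1,k) - G(n,k)$. -/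

import Mathlib

open Finset

/-- Pochhammer symbol `(a)_k = a(a+1)⋯(a+k-1)` for a rational `a`. -/
def poch (a : ℚ) (k : ℕ) : ℚ := ∏ i ∈ Finset.range k, (a + i)

/-- Euler numbers, defined by `∑ E_n x^n/n! = 2e^x/(e^{2x}+1) = sech x`. -/
def eulerNumber : ℕ → ℤ
  | 0 => 1
  | n + 1 =>
    -∑ k ∈ (Finset.range (n + 1)).attach,
      if Even (n + 1 - k.1) then ((n + 1).choose k.1 : ℤ) * eulerNumber k.1 else 0
  decreasing_by exact Finset.mem_range.mp k.2

/-- `x ≡ y (mod p^m)` for rationals: `v_p(x - y) ≥ m` (with `x = y` allowed). -/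
def ratCongr (p m : ℕ) (x y : ℚ) : Prop :=
  x = y ∨ (m : ℤ) ≤ padicValRat p (x - y)

/-- The WZ function `F(n,k)`, with `F(n,k) = 0` for `k > n`. -/
noncomputable def wzF (n k : ℕ) : ℚ :=
  if k ≤ n then
    (-1 : ℚ) ^ (n + k) * ((4 * n - 1) * poch (-(1/2)) n ^ 2 * poch (-(1/2)) (n + k)) /
      ((n.factorial : ℚ) ^ 2 * ((n - k).factorial : ℚ) * poch (-(1/2)) k ^ 2)
  else 0

/-- The WZ function `G(n,k)`, with `G(n,k) = 0` for `k > n` or `n = 0`. -/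
noncomputable def wzG (n k : ℕ) : ℚ :=
  if k ≤ n ∧ n ≠ 0 then
    (-1 : ℚ) ^ (n + k) * (2 * poch (-(1/2)) n ^ 2 * poch (-(1/2)) (n + k - 1)) /
      (((n - 1).factorial : ℚ) ^ 2 * ((n - k).factorial : ℚ) * poch (-(1/2)) k ^ 2)
  else 0

/-! Outside the support `k ≤ n` all four terms vanish. At `k = n + 1` only
`F(n, n) = G(n + 1, n + 1)` survives, i.e. `4n - 1 = 2(2n - 1/2)`. For `k ≤ n` the four terms are
hypergeometric multiples of one another, so after peeling off the last factor of each Pochhammer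
symbol and factorial the identity becomes a polynomial identity in `n` and `k`. -/

lemma poch_succ (a : ℚ) (k : ℕ) : poch a (k + 1) = poch a k * (a + k) :=
  prod_range_succ _ _

lemma poch_neg_half_ne_zero (k : ℕ) : poch (-(1/2)) k ≠ 0 := by
  refine prod_ne_zero_iff.mpr fun i _ h => ?_
  have : ((2 * i : ℕ) : ℚ) = (1 : ℕ) := by push_cast; linarith
  have := Nat.cast_injective this
  omega

lemma factorial_sq_mul_factorial_mul_poch_sq_ne_zero (a b c : ℕ) :
    (a.factorial : ℚ) ^ 2 * b.factorial * poch (-(1/2)) c ^ 2 ≠ 0 := by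
  have := poch_neg_half_ne_zero c
  positivity

lemma wzF_eq_zero_of_lt {n k : ℕ} (h : n < k) : wzF n k = 0 := if_neg (by omega)

lemma wzG_eq_zero_of_lt {n k : ℕ} (h : n < k) : wzG n k = 0 := if_neg (by omega)

theorem wzF_self_eq_wzG_succ_self (n : ℕ) : wzF n n = wzG (n + 1) (n + 1) := by
  have hD := factorial_sq_mul_factorial_mul_poch_sq_ne_zero
  rw [wzF, wzG, if_pos le_rfl, if_pos ⟨le_rfl, n.succ_ne_zero⟩, Nat.add_sub_cancel,
    show n + 1 + (n + 1) - 1 = n + n + 1 by omega, div_eq_div_iff (hD _ _ _) (hD _ _ _),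
    poch_succ _ (n + n), poch_succ _ n]
  push_cast
  ring

theorem wzF_sub_wzF_eq_wzG_sub_wzG_of_lt {n j : ℕ} (h : j < n) :
    wzF n j - wzF n (j + 1) = wzG (n + 1) (j + 1) - wzG n (j + 1) := by
  obtain ⟨d, rfl⟩ : ∃ d, n = d + j + 1 := ⟨n - j - 1, by omega⟩
  have hD := factorial_sq_mul_factorial_mul_poch_sq_ne_zero
  rw [wzF, wzF, wzG, wzG, if_pos (by omega), if_pos (by omega), if_pos (by omega),
    if_pos (by omega)]
  rw [show d + j + 1 - j = d + 1 by omega, show d + j + 1 - (j + 1) = d by omega,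
    show d + j + 1 + 1 - (j + 1) = d + 1 by omega, Nat.add_sub_cancel, Nat.add_sub_cancel,
    show d + j + 1 + 1 + (j + 1) - 1 = d + j + 1 + j + 1 by omega,
    show d + j + 1 + (j + 1) - 1 = d + j + 1 + j by omega,
    show d + j + 1 + (j + 1) = d + j + 1 + j + 1 by omega]
  rw [div_sub_div _ _ (hD _ _ _) (hD _ _ _), div_sub_div _ _ (hD _ _ _) (hD _ _ _),
    div_eq_div_iff (mul_ne_zero (hD _ _ _) (hD _ _ _)) (mul_ne_zero (hD _ _ _) (hD _ _ _)),
    poch_succ _ (d + j + 1 + j), poch_succ _ (d + j + 1), poch_succ _ j,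
    Nat.factorial_succ (d + j), Nat.factorial_succ d]
  push_cast
  ring

theorem stmt7 (n k : ℕ) (hk : 1 ≤ k) :
    wzF n (k - 1) - wzF n k = wzG (n + 1) k - wzG n k := by
  obtain ⟨j, rfl⟩ : ∃ j, k = j + 1 := ⟨k - 1, by omega⟩
  rw [Nat.add_sub_cancel]
  rcases lt_trichotomy j n with hjn | rfl | hnj
  · exact wzF_sub_wzF_eq_wzG_sub_wzG_of_lt hjn
  · rw [wzF_eq_zero_of_lt j.lt_succ_self, wzG_eq_zero_of_lt j.lt_succ_self, sub_zero, sub_zero,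
      wzF_self_eq_wzG_succ_self]
  · rw [wzF_eq_zero_of_lt hnj, wzF_eq_zero_of_lt (by omega), wzG_eq_zero_of_lt (by omega),
      wzG_eq_zero_of_lt (by omega)]
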